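/- Let s, t ∈ ℂ with |s|² > |t|² + 1. Then ∫_ℂ ∫_ℂ |K^{(s,t)}(z,w)|² · dλ(w) · dλ(z) = |s| / (|s|²−|t|²−1). (This is the square of the Hilbert–Schmidt norm of the canonical integral operator T^{(s,t)} on the Fock space F².) -/

import Mathlib

open MeasureTheory Real Filter

/-- Principal branch of the complex square root. -/
noncomputable def csqrt (z : ℂ) : ℂ := z ^ ((1 : ℂ) / 2)

/-- The canonical integral kernel `K^{(s,t)}(z,w)`. -/
noncomputable def Kst (s t z w : ℂ) : ℂ :=
  (csqrt s)⁻¹ *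
    Complex.exp ((t * z ^ 2 - (starRingEnd ℂ) t * ((starRingEnd ℂ) w) ^ 2
      + 2 * z * (starRingEnd ℂ) w) / (2 * s))

/-- Density of the Gaussian measure `dλ(z) = π⁻¹ e^{-|z|²} dA(z)` with respect to
Lebesgue area measure on `ℂ`. -/
noncomputable def gw (z : ℂ) : ℝ := Real.exp (-‖z‖ ^ 2) / Real.pi

/-! `‖Kst s t z w‖²` is `exp` of a real quadratic form in `(z, w)`, so both integrals are Gaussian.
For `‖b‖ < a`,
`∫ exp (-a ‖w‖² + Re (b w²) + Re (c w)) dA(w)`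
  `= π / √(a² - ‖b‖²) · exp ((a ‖c‖² + Re (b̄ c²)) / (4 (a² - ‖b‖²)))`,
obtained from the real two-variable Gaussian by Fubini. It is applied in `w` with `a = 1`,
`b = -t / s̄`, and then in `z` with `a = κ`, `b = κ t / s`, `c = 0`, where `κ = (D - 1) / D` and
`D = ‖s‖² - ‖t‖²`; the hypothesis `‖s‖² > ‖t‖² + 1` is exactly `κ > 0`. -/

open ComplexConjugate

lemma exp_neg_mul_sq_add_mul_eq {a : ℝ} (ha : a ≠ 0) (b x : ℝ) :
    exp (-a * x ^ 2 + b * x) = exp (-a * (x - b / (2 * a)) ^ 2) * exp (b ^ 2 / (4 * a)) := by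
  rw [← exp_add]; congr 1; field_simp; ring

lemma integrable_exp_neg_mul_sq_add_mul {a : ℝ} (ha : 0 < a) (b : ℝ) :
    Integrable fun x : ℝ ↦ exp (-a * x ^ 2 + b * x) := by
  simp only [exp_neg_mul_sq_add_mul_eq ha.ne' b]
  exact ((integrable_exp_neg_mul_sq ha).comp_sub_right _).mul_const _

lemma integral_exp_neg_mul_sq_add_mul {a : ℝ} (ha : 0 < a) (b : ℝ) :
    ∫ x : ℝ, exp (-a * x ^ 2 + b * x) = √(π / a) * exp (b ^ 2 / (4 * a)) := by
  simp only [exp_neg_mul_sq_add_mul_eq ha.ne' b]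
  rw [integral_mul_const, integral_sub_right_eq_self (fun x ↦ exp (-a * x ^ 2)), integral_gaussian]

lemma integral_exp_quadratic_snd {A B C : ℝ} (hC : 0 < C) (p q x : ℝ) :
    ∫ y : ℝ, exp (-(A * x ^ 2 + 2 * B * x * y + C * y ^ 2) + p * x + q * y)
      = √(π / C) * exp (q ^ 2 / (4 * C))
        * exp (-((A * C - B ^ 2) / C) * x ^ 2 + (p - B * q / C) * x) := by
  have hsplit : ∀ y, exp (-(A * x ^ 2 + 2 * B * x * y + C * y ^ 2) + p * x + q * y)
      = exp (-C * y ^ 2 + (q - 2 * B * x) * y) * exp (-A * x ^ 2 + p * x) := fun y ↦ by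
    rw [← exp_add]; ring_nf
  simp only [hsplit]
  rw [integral_mul_const, integral_exp_neg_mul_sq_add_mul hC]
  simp only [mul_assoc, ← exp_add]
  congr 2
  field_simp
  ring

theorem integral_exp_neg_quadratic_prod {A B C : ℝ} (hC : 0 < C) (hD : 0 < A * C - B ^ 2)
    (p q : ℝ) :
    ∫ v : ℝ × ℝ, exp (-(A * v.1 ^ 2 + 2 * B * v.1 * v.2 + C * v.2 ^ 2) + p * v.1 + q * v.2)
      = π / √(A * C - B ^ 2)
        * exp ((C * p ^ 2 - 2 * B * p * q + A * q ^ 2) / (4 * (A * C - B ^ 2))) := by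
  set f : ℝ × ℝ → ℝ :=
    fun v ↦ exp (-(A * v.1 ^ 2 + 2 * B * v.1 * v.2 + C * v.2 ^ 2) + p * v.1 + q * v.2)
  have hDC : 0 < (A * C - B ^ 2) / C := div_pos hD hC
  have hf : Integrable f (volume.prod volume) := by
    refine (integrable_prod_iff (by fun_prop)).2 ⟨.of_forall fun x ↦ ?_, ?_⟩
    · have := (integrable_exp_neg_mul_sq_add_mul hC (q - 2 * B * x)).mul_const
        (exp (-A * x ^ 2 + p * x))
      refine this.congr (.of_forall fun y ↦ ?_)
      simp only [f, ← exp_add]; ring_nf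
    · simp only [f, Real.norm_eq_abs, abs_exp, integral_exp_quadratic_snd hC]
      exact (integrable_exp_neg_mul_sq_add_mul hDC _).const_mul _
  rw [Measure.volume_eq_prod, integral_prod f hf]
  simp only [f, integral_exp_quadratic_snd hC]
  rw [integral_const_mul, integral_exp_neg_mul_sq_add_mul hDC, mul_mul_mul_comm, ← exp_add,
    ← sqrt_mul (by positivity)]
  congr 2
  · rw [show π / C * (π / ((A * C - B ^ 2) / C)) = π ^ 2 / (A * C - B ^ 2) by field_simp,
      sqrt_div (sq_nonneg π), sqrt_sq pi_nonneg]
  · have : C * A - B ^ 2 ≠ 0 := by linarith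
    field_simp
    ring

lemma integral_complex_eq_integral_prod (f : ℂ → ℝ) :
    ∫ w : ℂ, f w = ∫ v : ℝ × ℝ, f ⟨v.1, v.2⟩ :=
  (Complex.volume_preserving_equiv_real_prod.symm.integral_comp
    Complex.measurableEquivRealProd.symm.measurableEmbedding f).symm

theorem integral_exp_neg_mul_sq_norm_add_re {a : ℝ} {b : ℂ} (hb : ‖b‖ < a) (c : ℂ) :
    ∫ w : ℂ, exp (-a * ‖w‖ ^ 2 + (b * w ^ 2).re + (c * w).re)
      = π / √(a ^ 2 - ‖b‖ ^ 2)
        * exp ((a * ‖c‖ ^ 2 + (conj b * c ^ 2).re) / (4 * (a ^ 2 - ‖b‖ ^ 2))) := by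
  have hsq (w : ℂ) : ‖w‖ ^ 2 = w.re ^ 2 + w.im ^ 2 := by
    rw [Complex.sq_norm, Complex.normSq_apply]; ring
  have hC : 0 < a + b.re := by linarith [neg_abs_le b.re, Complex.abs_re_le_norm b]
  have hD : (a - b.re) * (a + b.re) - b.im ^ 2 = a ^ 2 - ‖b‖ ^ 2 := by rw [hsq]; ring
  have hexp (x y : ℝ) : -a * ‖(⟨x, y⟩ : ℂ)‖ ^ 2 + (b * (⟨x, y⟩ : ℂ) ^ 2).re + (c * ⟨x, y⟩).re
      = -((a - b.re) * x ^ 2 + 2 * b.im * x * y + (a + b.re) * y ^ 2) + c.re * x + -c.im * y := by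
    rw [hsq]; simp only [Complex.mul_re, Complex.mul_im, sq]; ring
  have hnum : (a + b.re) * c.re ^ 2 - 2 * b.im * c.re * -c.im + (a - b.re) * (-c.im) ^ 2
      = a * ‖c‖ ^ 2 + (conj b * c ^ 2).re := by
    rw [hsq]; simp only [Complex.mul_re, Complex.mul_im, Complex.conj_re, Complex.conj_im, sq]; ring
  rw [integral_complex_eq_integral_prod]
  simp only [hexp]
  rw [integral_exp_neg_quadratic_prod hC (by rw [hD]; nlinarith [norm_nonneg b]), hD, hnum]

lemma norm_csqrt (z : ℂ) : ‖csqrt z‖ = √‖z‖ := by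
  rw [csqrt, show (1 : ℂ) / 2 = ((1 / 2 : ℝ) : ℂ) by norm_num, Complex.norm_cpow_real,
    sqrt_eq_rpow]

lemma sq_norm_Kst (s t z w : ℂ) :
    ‖Kst s t z w‖ ^ 2
      = exp (((t * z ^ 2 - conj t * conj w ^ 2 + 2 * z * conj w) / s).re) / ‖s‖ := by
  rw [Kst, norm_mul, norm_inv, norm_csqrt, Complex.norm_exp, mul_pow, inv_pow,
    sq_sqrt (norm_nonneg s), ← exp_nat_mul, ← Complex.re_ofReal_mul, div_eq_inv_mul (exp _)]
  congr 3
  push_cast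
  ring

lemma re_Kst_exponent (s t z w : ℂ) :
    ((t * z ^ 2 - conj t * conj w ^ 2 + 2 * z * conj w) / s).re
      = (t * z ^ 2 / s).re + (-t / conj s * w ^ 2).re + (2 * conj z / conj s * w).re := by
  rw [← Complex.conj_re (-t / conj s * w ^ 2), ← Complex.conj_re (2 * conj z / conj s * w)]
  simp only [map_mul, map_div₀, map_neg, map_pow, map_ofNat, Complex.conj_conj, ← Complex.add_re]
  ring_nf

lemma sq_norm_Kst_mul_gw (s t z w : ℂ) :
    ‖Kst s t z w‖ ^ 2 * gw w = exp ((t * z ^ 2 / s).re) / (π * ‖s‖)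
      * exp (-1 * ‖w‖ ^ 2 + (-t / conj s * w ^ 2).re + (2 * conj z / conj s * w).re) := by
  rw [sq_norm_Kst, gw, re_Kst_exponent, div_mul_div_comm, div_mul_eq_mul_div (exp _), mul_comm π,
    ← exp_add, ← exp_add]
  ring_nf

lemma re_conj_neg_div_conj_mul_sq (s t z : ℂ) (hs : s ≠ 0) :
    (conj (-t / conj s) * (2 * conj z / conj s) ^ 2).re = -4 * (t * z ^ 2 / s).re / ‖s‖ ^ 2 := by
  have : conj (-t / conj s) * (2 * conj z / conj s) ^ 2
      = -4 * conj (t * z ^ 2 / s) / (‖s‖ ^ 2 : ℝ) := by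
    rw [Complex.ofReal_pow, ← Complex.mul_conj']
    simp only [map_mul, map_div₀, map_neg, map_pow, Complex.conj_conj]
    have : conj s ≠ 0 := by simpa using hs
    field_simp
    ring
  rw [this, Complex.div_ofReal_re, ← Complex.ofReal_ofNat, ← Complex.ofReal_neg,
    Complex.re_ofReal_mul, Complex.conj_re, mul_div_assoc]

lemma integral_sq_norm_Kst_mul_gw {s t : ℂ} (hts : ‖t‖ < ‖s‖) (z : ℂ) :
    ∫ w, ‖Kst s t z w‖ ^ 2 * gw w
      = exp ((t * z ^ 2 / s).re + (‖z‖ ^ 2 - (t * z ^ 2 / s).re) / (‖s‖ ^ 2 - ‖t‖ ^ 2))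
        / √(‖s‖ ^ 2 - ‖t‖ ^ 2) := by
  have hs : 0 < ‖s‖ := (norm_nonneg t).trans_lt hts
  have hD : 0 < ‖s‖ ^ 2 - ‖t‖ ^ 2 := by nlinarith [norm_nonneg t]
  have hb : ‖-t / conj s‖ = ‖t‖ / ‖s‖ := by simp
  have hc : ‖2 * conj z / conj s‖ = 2 * ‖z‖ / ‖s‖ := by simp
  have hsqrt : √(1 ^ 2 - (‖t‖ / ‖s‖) ^ 2) = √(‖s‖ ^ 2 - ‖t‖ ^ 2) / ‖s‖ := by
    rw [show 1 ^ 2 - (‖t‖ / ‖s‖) ^ 2 = (‖s‖ ^ 2 - ‖t‖ ^ 2) / ‖s‖ ^ 2 by field_simp,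
      sqrt_div hD.le, sqrt_sq hs.le]
  simp only [sq_norm_Kst_mul_gw]
  rw [integral_const_mul,
    integral_exp_neg_mul_sq_norm_add_re (by rw [hb]; exact (div_lt_one hs).2 hts), hb, hc, re_conj_neg_div_conj_mul_sq s t z (norm_pos_iff.1 hs), hsqrt, exp_add]
  field_simp
  congr 1
  field_simp
  ring

lemma integral_exp_mul_gw {s t : ℂ} (hst : ‖t‖ ^ 2 + 1 < ‖s‖ ^ 2) :
    ∫ z, exp ((t * z ^ 2 / s).re + (‖z‖ ^ 2 - (t * z ^ 2 / s).re) / (‖s‖ ^ 2 - ‖t‖ ^ 2))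
        / √(‖s‖ ^ 2 - ‖t‖ ^ 2) * gw z
      = ‖s‖ / (‖s‖ ^ 2 - ‖t‖ ^ 2 - 1) := by
  set D := ‖s‖ ^ 2 - ‖t‖ ^ 2 with hD_def
  set κ := (D - 1) / D
  have hD : 1 < D := by linarith
  have hκ : 0 < κ := div_pos (by linarith) (by linarith)
  have hs : 0 < ‖s‖ := by nlinarith [norm_nonneg s, sq_nonneg ‖t‖]
  have hb : ‖(κ : ℂ) * (t / s)‖ = κ * (‖t‖ / ‖s‖) := by simp [abs_of_pos hκ]
  have hts : ‖t‖ / ‖s‖ < 1 := by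
    rw [div_lt_one hs]; nlinarith [norm_nonneg s, norm_nonneg t]
  have hpt (z : ℂ) : exp ((t * z ^ 2 / s).re + (‖z‖ ^ 2 - (t * z ^ 2 / s).re) / D) / √D * gw z
      = (π * √D)⁻¹ * exp (-κ * ‖z‖ ^ 2 + ((κ : ℂ) * (t / s) * z ^ 2).re + (0 * z).re) := by
    rw [gw, div_mul_div_comm, ← exp_add, mul_assoc, Complex.re_ofReal_mul, zero_mul,
      Complex.zero_re, add_zero, inv_mul_eq_div, mul_comm π, mul_div_assoc]
    congr 2
    simp only [κ]
    field_simp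
    ring
  simp only [hpt]
  rw [integral_const_mul, integral_exp_neg_mul_sq_norm_add_re (by rw [hb]; nlinarith), hb]
  have hsqrt : √(κ ^ 2 - (κ * (‖t‖ / ‖s‖)) ^ 2) = κ / ‖s‖ * √D := by
    rw [show κ ^ 2 - (κ * (‖t‖ / ‖s‖)) ^ 2 = (κ / ‖s‖) ^ 2 * D by field_simp; rw [hD_def],
      sqrt_mul (sq_nonneg _), sqrt_sq (by positivity)]
  have hsqD : √D ^ 2 = D := sq_sqrt (by linarith)
  simp only [norm_zero, Complex.zero_re, zero_pow two_ne_zero, mul_zero, add_zero, zero_div,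
    exp_zero, mul_one, hsqrt, κ]
  field_simp
  rw [hsqD]

theorem stmt6 (s t : ℂ) (hst : ‖s‖ ^ 2 > ‖t‖ ^ 2 + 1) :
    (∫ z : ℂ, (∫ w : ℂ, ‖Kst s t z w‖ ^ 2 * gw w) * gw z)
      = ‖s‖ / (‖s‖ ^ 2 - ‖t‖ ^ 2 - 1) := by
  have hts : ‖t‖ < ‖s‖ := lt_of_pow_lt_pow_left₀ 2 (norm_nonneg s) (by linarith)
  simp only [integral_sq_norm_Kst_mul_gw hts]
  exact integral_exp_mul_gw hst
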